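/- For the binding-neuron-type setting: if p⁰ is continuous with p⁰(0) = 0, p⁰ > 0 on (0,∞), and bounded, then the two-variable function (t,s) ↦ p^inh(t|s) = χ(s−t)p⁰(t) + P⁰(s)p⁰(t−s) is continuous at every point (t,s) with t ≠ s, t ≥ 0, s ∈ ]0,Δ], and discontinuous at every point (t,s) with t = s > 0. -/

import Mathlib

open MeasureTheory Set Filter Topology

/-- Heaviside step function: 1 for `0 ≤ x`, 0 otherwise. -/
noncomputable def chi (x : ℝ) : ℝ := if 0 ≤ x then 1 else 0

/-- Survival function `P⁰(s) = 1 − ∫₀^s p⁰(u) du`. -/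
noncomputable def P0 (p0 : ℝ → ℝ) (s : ℝ) : ℝ := 1 - ∫ u in (0:ℝ)..s, p0 u

/-- `p^inh(t|s) = χ(s−t)·p⁰(t) + P⁰(s)·p⁰(t−s)`. -/
noncomputable def pinh (p0 : ℝ → ℝ) (t s : ℝ) : ℝ :=
  chi (s - t) * p0 t + P0 p0 s * p0 (t - s)

theorem stmt19 (p0 : ℝ → ℝ) (Δ : ℝ) (hΔ : 0 < Δ)
    (hcont : Continuous p0)
    (hzero : ∀ u ≤ (0:ℝ), p0 u = 0)
    (hpos : ∀ u > (0:ℝ), 0 < p0 u)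
    (hbdd : ∃ M : ℝ, ∀ u, |p0 u| ≤ M) :
    (∀ t s : ℝ, t ≠ s → 0 ≤ t → s ∈ Set.Ioc (0:ℝ) Δ →
      ContinuousAt (fun q : ℝ × ℝ => pinh p0 q.1 q.2) (t, s)) ∧
    (∀ s : ℝ, s ∈ Set.Ioc (0:ℝ) Δ →
      ¬ ContinuousAt (fun q : ℝ × ℝ => pinh p0 q.1 q.2) (s, s)) := by
  have hP0 : Continuous (P0 p0) := by
    have := intervalIntegral.continuous_primitive (μ := volume)
      (fun a b => hcont.intervalIntegrable a b) 0
    exact continuous_const.sub this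
  have hg : Continuous (fun q : ℝ × ℝ => P0 p0 q.2 * p0 (q.1 - q.2)) :=
    (hP0.comp continuous_snd).mul (hcont.comp (continuous_fst.sub continuous_snd))
  constructor
  · intro t s hts ht hs
    rcases lt_or_gt_of_ne hts with h | h
    · -- t < s : chi = 1 near the point
      have hopen : IsOpen {q : ℝ × ℝ | q.1 < q.2} := isOpen_lt continuous_fst continuous_snd
      have hev : ∀ᶠ q : ℝ × ℝ in 𝓝 (t, s),
          (fun q : ℝ × ℝ => p0 q.1 + P0 p0 q.2 * p0 (q.1 - q.2)) q
            = (fun q : ℝ × ℝ => pinh p0 q.1 q.2) q := by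
        filter_upwards [hopen.mem_nhds h] with q hq
        have hq' : q.1 < q.2 := hq
        have : (0:ℝ) ≤ q.2 - q.1 := by linarith
        simp [pinh, chi, this]
      exact (((hcont.comp continuous_fst).add hg).continuousAt).congr hev
    · -- s < t : chi = 0 near the point
      have hopen : IsOpen {q : ℝ × ℝ | q.2 < q.1} := isOpen_lt continuous_snd continuous_fst
      have hev : ∀ᶠ q : ℝ × ℝ in 𝓝 (t, s),
          (fun q : ℝ × ℝ => P0 p0 q.2 * p0 (q.1 - q.2)) q
            = (fun q : ℝ × ℝ => pinh p0 q.1 q.2) q := by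
        filter_upwards [hopen.mem_nhds h] with q hq
        have hq' : q.2 < q.1 := hq
        have : ¬ (0:ℝ) ≤ q.2 - q.1 := by push_neg; linarith
        simp [pinh, chi, this]
      exact hg.continuousAt.congr hev
  · intro s hs hC
    have hp00 : p0 0 = 0 := hzero 0 le_rfl
    have hval : pinh p0 s s = p0 s := by simp [pinh, chi, hp00]
    -- restrict to the horizontal line t ↦ (t, s)
    have hmk : Tendsto (fun t : ℝ => ((t, s) : ℝ × ℝ)) (𝓝 s) (𝓝 (s, s)) :=
      (continuous_id.prodMk continuous_const).tendsto s
    have hline : Tendsto (fun t : ℝ => pinh p0 t s) (𝓝 s) (𝓝 (pinh p0 s s)) := by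
      have := hC.tendsto.comp hmk
      simpa [Function.comp_def] using this
    have h1 : Tendsto (fun t : ℝ => pinh p0 t s) (𝓝[>] s) (𝓝 (p0 s)) := by
      rw [← hval]
      exact hline.mono_left nhdsWithin_le_nhds
    have h2 : Tendsto (fun t : ℝ => pinh p0 t s) (𝓝[>] s) (𝓝 0) := by
      have hlim : Tendsto (fun t : ℝ => P0 p0 s * p0 (t - s)) (𝓝[>] s) (𝓝 0) := by
        have : Tendsto (fun t : ℝ => P0 p0 s * p0 (t - s)) (𝓝 s)
            (𝓝 (P0 p0 s * p0 (s - s))) :=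
          (continuous_const.mul (hcont.comp (continuous_id.sub continuous_const))).tendsto s
        simpa [hp00] using this.mono_left nhdsWithin_le_nhds
      refine hlim.congr' ?_
      filter_upwards [self_mem_nhdsWithin] with t ht
      have : ¬ (0:ℝ) ≤ s - t := by simp only [Set.mem_Ioi] at ht; linarith
      simp [pinh, chi, this]
    have hne : (𝓝[>] s).NeBot := nhdsGT_neBot s
    have := tendsto_nhds_unique h1 h2
    exact absurd this (ne_of_gt (hpos s hs.1))
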